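/- arXiv:2009.13428 — 3 statements merged into one kernel-verified Lean document; each statement's English description precedes it below -/
import Mathlib

section
/- Let A₁,…,Aₙ be square matrices (of possibly different sizes) that are invertible with exp(Aₖt) → 0 as t → ∞, let D₁,…,Dₙ be matrices of compatible dimensions with Dₖ𝟏 = −Aₖ𝟏 for each k, and let α be a probability row vector of the size of A₁. Then the function f(y₁,…,yₙ) = α·exp(A₁y₁)·D₁·exp(A₂y₂)·D₂ ⋯ exp(Aₙyₙ)·Dₙ·𝟏 integrates to 1 over [0,∞)^n; that is, ∫₀^∞ ⋯ ∫₀^∞ f(y₁,…,yₙ) dy₁⋯dyₙ = 1. -/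
open Matrix MeasureTheory Filter

/-- Iterated left-multiplication of a row vector by a chain of (rectangular) step
matrices `M 0, M 1, …`, yielding a row vector at every intermediate position. -/
noncomputable def chainRow {n : ℕ} (d : Fin (n + 1) → ℕ)
    (M : (k : Fin n) → Matrix (Fin (d k.castSucc)) (Fin (d k.succ)) ℝ)
    (v0 : Fin (d 0) → ℝ) : (k : Fin (n + 1)) → Fin (d k) → ℝ :=
  Fin.induction v0 (fun k ih => ih ᵥ* M k)

/-!
Since `d/dt (v exp(tA) 𝟏) = v exp(tA) A 𝟏 = -v exp(tA) D 𝟏` and `exp(tA) → 0`, one step of the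
chain preserves mass: `∫₀^∞ v exp(tA) D 𝟏 dt = v 𝟏`. By Tonelli, integrating out `y₁` first
replaces `α` by `α exp(A₁y₁) D₁` in an integral with one factor fewer, so by induction on the
number of factors the whole integral telescopes to `α 𝟏 = 1`. All integrands are nonnegative, so
Tonelli applies and the computation can be done with lower Lebesgue integrals.
-/

open NormedSpace Set Topology
open scoped ENNReal

namespace Matrix

theorem vecMul_nonneg {m n : Type*} [Fintype m] {v : m → ℝ} {M : Matrix m n ℝ}
    (hv : 0 ≤ v) (hM : ∀ i j, 0 ≤ M i j) : 0 ≤ v ᵥ* M :=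
  fun j => dotProduct_nonneg_of_nonneg hv fun i => hM i j

variable {m : Type*} [Fintype m] [DecidableEq m]

theorem hasDerivAt_exp_smul_apply (A : Matrix m m ℝ) (i j : m) (t : ℝ) :
    HasDerivAt (fun s : ℝ => exp (s • A) i j) ((exp (t • A) * A) i j) t := by
  let : NormedRing (Matrix m m ℝ) := Matrix.linftyOpNormedRing
  let : NormedAlgebra ℝ (Matrix m m ℝ) := Matrix.linftyOpNormedAlgebra
  exact (LinearMap.toContinuousLinearMap (entryLinearMap ℝ ℝ i j)).hasFDerivAt.comp_hasDerivAt t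
    (hasDerivAt_exp_smul_const A t)

theorem continuous_exp_smul (A : Matrix m m ℝ) : Continuous fun t : ℝ => exp (t • A) :=
  continuous_pi fun i => continuous_pi fun j => continuous_iff_continuousAt.2 fun t =>
    (hasDerivAt_exp_smul_apply A i j t).continuousAt

theorem hasDerivAt_dotProduct_exp_smul_mulVec (A : Matrix m m ℝ) (v u : m → ℝ) (t : ℝ) :
    HasDerivAt (fun s : ℝ => v ⬝ᵥ (exp (s • A) *ᵥ u)) (v ⬝ᵥ (exp (t • A) *ᵥ (A *ᵥ u))) t := by
  rw [mulVec_mulVec]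
  exact HasDerivAt.fun_sum fun i _ => .const_mul _ <| HasDerivAt.fun_sum fun j _ =>
    (hasDerivAt_exp_smul_apply A i j t).mul_const _

theorem tendsto_dotProduct_exp_smul_mulVec {A : Matrix m m ℝ}
    (hA : ∀ i j, Tendsto (fun t : ℝ => exp (t • A) i j) atTop (𝓝 0)) (v u : m → ℝ) :
    Tendsto (fun t : ℝ => v ⬝ᵥ (exp (t • A) *ᵥ u)) atTop (𝓝 0) := by
  have h := tendsto_finsetSum Finset.univ fun i _ => (tendsto_finsetSum Finset.univ fun j _ =>
    (hA i j).mul_const (u j)).const_mul (v i)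
  simp only [zero_mul, mul_zero, Finset.sum_const_zero] at h
  exact h

theorem lintegral_Ioi_dotProduct_exp_smul_mulVec_neg {A : Matrix m m ℝ}
    (hA : ∀ i j, Tendsto (fun t : ℝ => exp (t • A) i j) atTop (𝓝 0)) (v u : m → ℝ)
    (hnonneg : ∀ t ∈ Ioi (0 : ℝ), 0 ≤ v ⬝ᵥ (exp (t • A) *ᵥ -(A *ᵥ u))) :
    ∫⁻ t in Ioi (0 : ℝ), ENNReal.ofReal (v ⬝ᵥ (exp (t • A) *ᵥ -(A *ᵥ u))) =
      ENNReal.ofReal (v ⬝ᵥ u) := by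
  have hderiv : ∀ t ∈ Ici (0 : ℝ), HasDerivAt (fun s => -(v ⬝ᵥ (exp (s • A) *ᵥ u)))
      (v ⬝ᵥ (exp (t • A) *ᵥ -(A *ᵥ u))) t := fun t _ => by
    simpa only [mulVec_neg, dotProduct_neg] using
      (hasDerivAt_dotProduct_exp_smul_mulVec A v u t).fun_neg
  have hlim := by simpa using (tendsto_dotProduct_exp_smul_mulVec hA v u).neg
  rw [← ofReal_integral_eq_lintegral_ofReal (integrableOn_Ioi_deriv_of_nonneg' hderiv hnonneg hlim)
    (ae_restrict_of_forall_mem measurableSet_Ioi hnonneg),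
    integral_Ioi_of_hasDerivAt_of_nonneg' hderiv hnonneg hlim]
  simp

theorem lintegral_Ioi_vecMul_exp_smul_mul_dotProduct_one {p : Type*} [Fintype p]
    {A : Matrix m m ℝ} {D : Matrix m p ℝ}
    (hA : ∀ i j, Tendsto (fun t : ℝ => exp (t • A) i j) atTop (𝓝 0))
    (hD : D *ᵥ (fun _ => 1) = -(A *ᵥ fun _ => 1)) (v : m → ℝ)
    (hnonneg : ∀ t ∈ Ioi (0 : ℝ), 0 ≤ (v ᵥ* (exp (t • A) * D)) ⬝ᵥ fun _ => 1) :
    ∫⁻ t in Ioi (0 : ℝ), ENNReal.ofReal ((v ᵥ* (exp (t • A) * D)) ⬝ᵥ fun _ => 1) =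
      ENNReal.ofReal (v ⬝ᵥ fun _ => 1) := by
  have hrw : ∀ t : ℝ, (v ᵥ* (exp (t • A) * D)) ⬝ᵥ (fun _ => 1) =
      v ⬝ᵥ (exp (t • A) *ᵥ -(A *ᵥ fun _ => 1)) := fun t => by
    rw [← dotProduct_mulVec, ← mulVec_mulVec, hD]
  simp only [hrw] at hnonneg ⊢
  exact lintegral_Ioi_dotProduct_exp_smul_mulVec_neg hA v _ hnonneg

end Matrix

theorem MeasureTheory.lintegral_pi_fin_succ {X : Type*} [MeasurableSpace X] (μ : Measure X)
    [SigmaFinite μ] {n : ℕ} {f : (Fin (n + 1) → X) → ℝ≥0∞} (hf : Measurable f) :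
    ∫⁻ y, f y ∂Measure.pi (fun _ => μ) =
      ∫⁻ t, ∫⁻ y, f (Fin.cons t y) ∂Measure.pi (fun _ => μ) ∂μ := by
  set e := (MeasurableEquiv.piFinSuccAbove (fun _ : Fin (n + 1) => X) 0).symm
  rw [← (measurePreserving_piFinSuccAbove (fun _ => μ) 0).symm.lintegral_comp_emb
    e.measurableEmbedding, lintegral_prod (fun p => f (e p)) (hf.comp e.measurable).aemeasurable]
  simp only [e, MeasurableEquiv.piFinSuccAbove_symm_apply, Fin.insertNthEquiv_zero]
  rfl

section chainRow

@[simp]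
theorem chainRow_zero {n : ℕ} (d : Fin (n + 1) → ℕ)
    (M : (k : Fin n) → Matrix (Fin (d k.castSucc)) (Fin (d k.succ)) ℝ) (v : Fin (d 0) → ℝ) :
    chainRow d M v 0 = v :=
  rfl

@[simp]
theorem chainRow_succ {n : ℕ} (d : Fin (n + 1) → ℕ)
    (M : (k : Fin n) → Matrix (Fin (d k.castSucc)) (Fin (d k.succ)) ℝ) (v : Fin (d 0) → ℝ)
    (k : Fin n) : chainRow d M v k.succ = chainRow d M v k.castSucc ᵥ* M k :=
  Fin.induction_succ _ _ k

theorem chainRow_succ_eq_chainRow_tail {n : ℕ} (d : Fin (n + 2) → ℕ)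
    (M : (k : Fin (n + 1)) → Matrix (Fin (d k.castSucc)) (Fin (d k.succ)) ℝ)
    (v : Fin (d 0) → ℝ) (k : Fin (n + 1)) :
    chainRow d M v k.succ = chainRow (fun k => d k.succ) (fun k => M k.succ) (v ᵥ* M 0) k := by
  induction k using Fin.induction with
  | zero => exact chainRow_succ d M v 0
  | succ k ih =>
    rw [chainRow_succ, chainRow_succ]
    exact congrArg (· ᵥ* M k.succ) ih

theorem chainRow_nonneg {n : ℕ} (d : Fin (n + 1) → ℕ)
    {M : (k : Fin n) → Matrix (Fin (d k.castSucc)) (Fin (d k.succ)) ℝ} {v : Fin (d 0) → ℝ}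
    (hv : 0 ≤ v) (hM : ∀ k i j, 0 ≤ M k i j) (k : Fin (n + 1)) : 0 ≤ chainRow d M v k := by
  induction k using Fin.induction with
  | zero => exact hv
  | succ k ih => exact (chainRow_succ d M v k).symm ▸ vecMul_nonneg ih (hM k)

theorem measurable_chainRow {X : Type*} [MeasurableSpace X] {n : ℕ} (d : Fin (n + 1) → ℕ)
    {M : X → (k : Fin n) → Matrix (Fin (d k.castSucc)) (Fin (d k.succ)) ℝ}
    (hM : ∀ k i j, Measurable fun x => M x k i j) (v : Fin (d 0) → ℝ) (k : Fin (n + 1)) :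
    Measurable fun x => chainRow d (M x) v k := by
  induction k using Fin.induction with
  | zero => exact measurable_const
  | succ k ih =>
    simp only [chainRow_succ]
    exact measurable_pi_lambda _ fun j => by unfold vecMul dotProduct; fun_prop

theorem lintegral_pi_chainRow_dotProduct_one {X : Type*} [MeasurableSpace X] (μ : Measure X)
    [SigmaFinite μ] {n : ℕ} (d : Fin (n + 1) → ℕ)
    (M : (k : Fin n) → X → Matrix (Fin (d k.castSucc)) (Fin (d k.succ)) ℝ)
    (hmeas : ∀ k i j, Measurable fun x => M k x i j)
    (hnonneg : ∀ k, ∀ᵐ x ∂μ, ∀ i j, 0 ≤ M k x i j)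
    (hmass : ∀ k (v : Fin (d k.castSucc) → ℝ), 0 ≤ v →
      ∫⁻ x, ENNReal.ofReal ((v ᵥ* M k x) ⬝ᵥ fun _ => 1) ∂μ = ENNReal.ofReal (v ⬝ᵥ fun _ => 1))
    (v : Fin (d 0) → ℝ) (hv : 0 ≤ v) :
    ∫⁻ y, ENNReal.ofReal (chainRow d (fun k => M k (y k)) v (Fin.last n) ⬝ᵥ fun _ => 1)
        ∂Measure.pi (fun _ => μ) = ENNReal.ofReal (v ⬝ᵥ fun _ => 1) := by
  induction n with
  | zero => simp
  | succ n ih =>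
    have hmeas_density := measurable_chainRow d (M := fun (y : Fin (n + 1) → X) k => M k (y k))
      (fun k i j => (hmeas k i j).comp (measurable_pi_apply k)) v (Fin.last (n + 1))
    rw [lintegral_pi_fin_succ μ (by fun_prop)]
    refine (lintegral_congr_ae ?_).trans (hmass 0 v hv)
    filter_upwards [hnonneg 0] with t ht
    have hpeel : ∀ y : Fin n → X,
        chainRow d (fun k => M k ((Fin.cons t y : Fin (n + 1) → X) k)) v (Fin.last (n + 1)) =
          chainRow (fun k => d k.succ) (fun k => M k.succ (y k)) (v ᵥ* M 0 t) (Fin.last n) :=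
      fun y => chainRow_succ_eq_chainRow_tail d _ v (Fin.last n)
    simp only [hpeel]
    exact ih _ _ (fun k => hmeas k.succ) (fun k => hnonneg k.succ) (fun k => hmass k.succ) _
      (vecMul_nonneg hv ht)

end chainRow

theorem stmt_2_general (n : ℕ) (d : Fin (n + 2) → ℕ)
    (A : (k : Fin (n + 1)) → Matrix (Fin (d k.castSucc)) (Fin (d k.castSucc)) ℝ)
    (D : (k : Fin (n + 1)) → Matrix (Fin (d k.castSucc)) (Fin (d k.succ)) ℝ)
    (α : Fin (d 0) → ℝ)
    (hα : ∀ i, 0 ≤ α i) (hα1 : α ⬝ᵥ (fun _ => (1 : ℝ)) = 1)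
    (hAdecay : ∀ k, ∀ i j, Tendsto (fun t : ℝ => (NormedSpace.exp (t • A k)) i j) atTop (nhds 0))
    (hAnn : ∀ k, ∀ t : ℝ, 0 ≤ t → ∀ i j, 0 ≤ (NormedSpace.exp (t • A k)) i j)
    (hDnn : ∀ k, ∀ i j, 0 ≤ D k i j)
    (hD : ∀ k, D k *ᵥ (fun _ => (1 : ℝ)) = -(A k *ᵥ (fun _ => (1 : ℝ)))) :
    (∫ y in Set.univ.pi (fun _ : Fin (n + 1) => Set.Ioi (0 : ℝ)),
        (chainRow d (fun k => NormedSpace.exp (y k • A k) * D k) α (Fin.last (n + 1))) ⬝ᵥ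
          (fun _ => (1 : ℝ))) = 1 := by
  have hstep_nonneg : ∀ k, ∀ t : ℝ, 0 ≤ t → ∀ i j, 0 ≤ (exp (t • A k) * D k) i j :=
    fun k t ht i j => dotProduct_nonneg_of_nonneg (fun l => hAnn k t ht i l) fun l => hDnn k l j
  have hstep_meas : ∀ k i j, Measurable fun t : ℝ => (exp (t • A k) * D k) i j := fun k i j =>
    (((continuous_exp_smul (A k)).matrix_mul continuous_const).matrix_elem i j).measurable
  have hlint := lintegral_pi_chainRow_dotProduct_one (volume.restrict (Ioi 0)) d
    (fun k t => exp (t • A k) * D k) hstep_meas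
    (fun k => ae_restrict_of_forall_mem measurableSet_Ioi fun t ht => hstep_nonneg k t ht.le)
    (fun k v hv => lintegral_Ioi_vecMul_exp_smul_mul_dotProduct_one (hAdecay k) (hD k) v
      fun t ht => dotProduct_nonneg_of_nonneg (vecMul_nonneg hv (hstep_nonneg k t ht.le))
        fun _ => zero_le_one) α hα
  rw [← Measure.restrict_pi_pi, ← volume_pi] at hlint
  have hdensity_nonneg : ∀ y ∈ univ.pi fun _ : Fin (n + 1) => Ioi (0 : ℝ),
      0 ≤ chainRow d (fun k => exp (y k • A k) * D k) α (Fin.last (n + 1)) ⬝ᵥ fun _ => 1 :=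
    fun y hy => dotProduct_nonneg_of_nonneg
      (chainRow_nonneg d hα (fun k => hstep_nonneg k (y k) (hy k trivial).le) _)
      fun _ => zero_le_one
  have hdensity_meas := measurable_chainRow d
    (M := fun (y : Fin (n + 1) → ℝ) k => exp (y k • A k) * D k)
    (fun k i j => (hstep_meas k i j).comp (measurable_pi_apply k)) α (Fin.last (n + 1))
  rw [integral_eq_lintegral_of_nonneg_ae
    (ae_restrict_of_forall_mem (MeasurableSet.univ_pi fun _ => measurableSet_Ioi) hdensity_nonneg)
    ((continuous_id.dotProduct continuous_const).measurable.comp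
      hdensity_meas).aestronglyMeasurable, hlint, hα1, ENNReal.toReal_ofReal zero_le_one]

/-- The sequential multivariate phase-type density
`f(y₁,…,yₙ) = α exp(A₁y₁) D₁ exp(A₂y₂) D₂ ⋯ exp(Aₙyₙ) Dₙ 𝟏`
(sizes of the blocks may differ) integrates to 1 over `[0,∞)ⁿ`, provided each `Aₖ` is
invertible with `exp(Aₖ t) → 0` entrywise and entrywise nonnegative for `t ≥ 0`, each `Dₖ` is
entrywise nonnegative with `Dₖ𝟏 = −Aₖ𝟏`, and `α` is a probability row vector. -/
theorem stmt_2 (n : ℕ) (d : Fin (n + 2) → ℕ)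
    (A : (k : Fin (n + 1)) → Matrix (Fin (d k.castSucc)) (Fin (d k.castSucc)) ℝ)
    (D : (k : Fin (n + 1)) → Matrix (Fin (d k.castSucc)) (Fin (d k.succ)) ℝ)
    (α : Fin (d 0) → ℝ)
    (hα : ∀ i, 0 ≤ α i) (hα1 : α ⬝ᵥ (fun _ => (1 : ℝ)) = 1)
    (hAinv : ∀ k, IsUnit (A k).det)
    (hAdecay : ∀ k, ∀ i j, Tendsto (fun t : ℝ => (NormedSpace.exp (t • A k)) i j) atTop (nhds 0))
    (hAnn : ∀ k, ∀ t : ℝ, 0 ≤ t → ∀ i j, 0 ≤ (NormedSpace.exp (t • A k)) i j)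
    (hDnn : ∀ k, ∀ i j, 0 ≤ D k i j)
    (hD : ∀ k, D k *ᵥ (fun _ => (1 : ℝ)) = -(A k *ᵥ (fun _ => (1 : ℝ)))) :
    (∫ y in Set.univ.pi (fun _ : Fin (n + 1) => Set.Ioi (0 : ℝ)),
        (chainRow d (fun k => NormedSpace.exp (y k • A k) * D k) α (Fin.last (n + 1))) ⬝ᵥ
          (fun _ => (1 : ℝ))) = 1 :=
  stmt_2_general n d A D α hα hα1 hAdecay hAnn hDnn hD
end

section
/- Let Ψ(h), h ≥ 0, be square matrices satisfying Ψ(0) = (λ/(λ+θ))(I − (c/(λ+θ))A)^{−1} and for h ≥ 1, Ψ(h) = ((c/(λ+θ)) Σ_{v=0}^{h−1} Ψ(v) D Ψ(h−v−1)) (I − (c/(λ+θ))A)^{−1}, where λ, c > 0, θ ≥ 0, and I − (c/(λ+θ))A is invertible. If the series Ψ̂ = Σ_{h=0}^∞ Ψ(h) converges absolutely, then Ψ̂ satisfies the Riccati equation (λ/c) I + Ψ̂(A − ((λ+θ)/c) I) + Ψ̂ D Ψ̂ = 0. -/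
/-!
Summing the recursion for `Ψ(h) (I − (c/(λ+θ))A)` over `h` and evaluating the convolution
series by the Cauchy product (valid since the series converges absolutely) gives
`Ψ̂ (I − (c/(λ+θ))A) = (λ/(λ+θ)) I + (c/(λ+θ)) Ψ̂ D Ψ̂`; scaling by `(λ+θ)/c` is the Riccati
equation.
-/

open Matrix

namespace Matrix

theorem hasSum_of_hasSum_apply {ι m n R : Type*} [AddCommMonoid R] [TopologicalSpace R]
    {f : ι → Matrix m n R} {F : Matrix m n R}
    (hf : ∀ i j, HasSum (fun k => f k i j) (F i j)) : HasSum f F :=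
  Pi.hasSum.2 fun i => Pi.hasSum.2 (hf i)

section

attribute [local instance] Matrix.linftyOpNormedAddCommGroup Matrix.linftyOpNormedSpace
  Matrix.linftyOpNormedRing

/-- In finite dimension summable series are absolutely summable, so the Cauchy product applies. -/
theorem hasSum_sum_range_mul {n : Type*} [Fintype n] [DecidableEq n] {f g : ℕ → Matrix n n ℝ}
    {F G : Matrix n n ℝ} (hf : HasSum f F) (hg : HasSum g G) :
    HasSum (fun k => ∑ v ∈ Finset.range (k + 1), f v * g (k - v)) (F * G) := by
  rw [← hf.tsum_eq, ← hg.tsum_eq]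
  exact hasSum_sum_range_mul_of_summable_norm (summable_norm_iff.2 hf.summable)
    (summable_norm_iff.2 hg.summable)

end

end Matrix

theorem riccati_of_mul_one_sub_smul_eq {𝕜 R : Type*} [Field 𝕜] [Ring R] [Algebra 𝕜 R]
    {X A D : R} {lam c θ : 𝕜} (hs : lam + θ ≠ 0) (hc : c ≠ 0)
    (h : X * (1 - (c / (lam + θ)) • A) = (lam / (lam + θ)) • 1 + (c / (lam + θ)) • (X * D * X)) :
    (lam / c) • 1 + X * (A - ((lam + θ) / c) • 1) + X * D * X = 0 := by
  simp only [mul_sub, mul_one, mul_smul_comm] at h ⊢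
  linear_combination (norm := match_scalars <;> field_simp <;> ring) (-((lam + θ) / c)) • h

/-- Riccati equation for the summed first-passage blocks: if `Ψ(0) = (λ/(λ+θ))(I − (c/(λ+θ))A)^{−1}`
and `Ψ(h) = ((c/(λ+θ)) Σ_{v=0}^{h−1} Ψ(v) D Ψ(h−v−1)) (I − (c/(λ+θ))A)^{−1}` for `h ≥ 1`,
and the series `Ψ̂ = Σ_h Ψ(h)` converges absolutely (entrywise), then
`(λ/c) I + Ψ̂ (A − ((λ+θ)/c) I) + Ψ̂ D Ψ̂ = 0`. -/
theorem stmt_13 (m : ℕ) (A D : Matrix (Fin m) (Fin m) ℝ)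
    (lam c θ : ℝ) (hlam : 0 < lam) (hc : 0 < c) (hθ : 0 ≤ θ)
    (hinv : IsUnit ((1 : Matrix (Fin m) (Fin m) ℝ) - (c / (lam + θ)) • A).det)
    (Ψ : ℕ → Matrix (Fin m) (Fin m) ℝ)
    (hΨ0 : Ψ 0 = (lam / (lam + θ)) • ((1 : Matrix (Fin m) (Fin m) ℝ) - (c / (lam + θ)) • A)⁻¹)
    (hΨrec : ∀ h : ℕ,
      Ψ (h + 1) =
        ((c / (lam + θ)) • ∑ v ∈ Finset.range (h + 1), Ψ v * D * Ψ (h - v)) *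
          ((1 : Matrix (Fin m) (Fin m) ℝ) - (c / (lam + θ)) • A)⁻¹)
    (habs : ∀ i j, Summable (fun h => |Ψ h i j|))
    (Ψhat : Matrix (Fin m) (Fin m) ℝ)
    (hΨhat : ∀ i j, Ψhat i j = ∑' h : ℕ, Ψ h i j) :
    (lam / c) • (1 : Matrix (Fin m) (Fin m) ℝ) +
      Ψhat * (A - ((lam + θ) / c) • (1 : Matrix (Fin m) (Fin m) ℝ)) +
      Ψhat * D * Ψhat = 0 := by
  set M := (1 : Matrix (Fin m) (Fin m) ℝ) - (c / (lam + θ)) • A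
  have hMinv : M⁻¹ * M = 1 := nonsing_inv_mul M hinv
  have hΨhat_sum : HasSum Ψ Ψhat := hasSum_of_hasSum_apply fun i j =>
    hΨhat i j ▸ (habs i j).of_abs.hasSum
  have hconv : HasSum (fun h => ∑ v ∈ Finset.range (h + 1), Ψ v * D * Ψ (h - v))
      (Ψhat * D * Ψhat) :=
    hasSum_sum_range_mul (hΨhat_sum.mul_right D) hΨhat_sum
  have htail : HasSum (fun h => Ψ (h + 1) * M) ((c / (lam + θ)) • (Ψhat * D * Ψhat)) := by
    simpa only [hΨrec, mul_assoc, hMinv, mul_one] using hconv.const_smul (c / (lam + θ))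
  have hfixed : Ψhat * M = (lam / (lam + θ)) • 1 + (c / (lam + θ)) • (Ψhat * D * Ψhat) := by
    have h := (hasSum_nat_add_iff (f := fun h => Ψ h * M) 1).1 htail
    rw [Finset.sum_range_one, hΨ0, smul_mul_assoc, hMinv, add_comm] at h
    exact (hΨhat_sum.mul_right M).unique h
  exact riccati_of_mul_one_sub_smul_eq (by positivity) hc.ne' hfixed
end

section
/- Let Y₁ have density f₁(y) = α exp(A₁y)(−A₁𝟏) and H₁ ~ Erlang(p,σ) with Y₁ ≤_st H₁ assumed for every phase-type density with sub-generator A₁ of the given family, and similarly all conditional second-coordinate densities y₂ ↦ (α exp(A₁y₁)D₁/(α exp(A₁y₁)D₁𝟏)) exp(A₂y₂)(−A₂𝟏) are dominated by the Erlang(p,σ) density in the usual stochastic order. Then the bivariate vector (Y₁,Y₂) with density f(y₁,y₂) = α exp(A₁y₁)D₁ exp(A₂y₂)D₂𝟏 is dominated in the usual multivariate stochastic order by (H₁,H₂), where H₁,H₂ are i.i.d. Erlang(p,σ): for every increasing set Γ ⊆ ℝ₊², ∫∫_Γ f(y₁,y₂) dy₁dy₂ ≤ ∫∫_Γ f_{p,σ}(y₁)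 f_{p,σ}(y₂) dy₁dy₂. -/
/-!
Integrate out the second coordinate first. For fixed `y₁` the joint density factors as the
marginal density `α exp(A₁y₁)(−A₁𝟏)` of `Y₁` times the conditional density of `Y₂`, and the
section `Γ_{y₁}` is an upper set of `[0,∞)`, hence a tail `(x,∞)` up to a null set; so the
conditional domination replaces the conditional density by `f_{p,σ}`. Integrating out the first
coordinate of `f_{Y₁}(y₁) f_{p,σ}(y₂)` in the same way, the domination of `Y₁` replaces `f_{Y₁}`
by `f_{p,σ}`.
-/

open Matrix MeasureTheory Filter

/-- The Erlang(p,σ) density `f_{p,σ}(t) = σ^p t^{p−1} e^{−σt} / (p−1)!` on `[0,∞)`. -/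
noncomputable def erlangDens (p : ℕ) (σ : ℝ) (t : ℝ) : ℝ :=
  σ ^ p * t ^ (p - 1) * Real.exp (-σ * t) / (p - 1).factorial

open Set

theorem erlangDens_nonneg (p : ℕ) {σ : ℝ} (hσ : 0 < σ) {t : ℝ} (ht : 0 ≤ t) :
    0 ≤ erlangDens p σ t := by
  unfold erlangDens
  positivity

theorem integrableOn_Ici_erlangDens (p : ℕ) {σ : ℝ} (hσ : 0 < σ) :
    IntegrableOn (erlangDens p σ) (Ici 0) := by
  have h := (integrableOn_rpow_mul_exp_neg_mul_rpow (s := ((p - 1 : ℕ) : ℝ))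
    (neg_one_lt_zero.trans_le (Nat.cast_nonneg _)) one_pos hσ).const_mul
    (σ ^ p / (p - 1).factorial)
  refine (integrableOn_Ici_iff_integrableOn_Ioi).2 <|
    IntegrableOn.congr_fun h (fun t _ => ?_) measurableSet_Ioi
  simp only [erlangDens, Real.rpow_natCast, Real.rpow_one]
  ring

section PhaseType

variable {ι : Type*} [Fintype ι] [DecidableEq ι]

noncomputable def phaseTypeDensity (A : Matrix ι ι ℝ) (β : ι → ℝ) (t : ℝ) : ℝ :=
  (β ᵥ* NormedSpace.exp (t • A)) ⬝ᵥ (-(A *ᵥ fun _ => 1))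

theorem hasDerivAt_vecMul_exp_smul_dotProduct (A : Matrix ι ι ℝ) (β w : ι → ℝ) (t : ℝ) :
    HasDerivAt (fun u : ℝ => (β ᵥ* NormedSpace.exp (u • A)) ⬝ᵥ w)
      ((β ᵥ* NormedSpace.exp (t • A)) ⬝ᵥ (A *ᵥ w)) t := by
  let L : Matrix ι ι ℝ →ₗ[ℝ] ℝ :=
    { toFun := fun M => (β ᵥ* M) ⬝ᵥ w
      map_add' := fun M N => by simp only [vecMul_add, add_dotProduct]
      map_smul' := fun r M => by simp only [vecMul_smul, smul_dotProduct, RingHom.id_apply] }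
  -- `exp` does not depend on a norm; any Banach-algebra norm on matrices computes its derivative
  open scoped Matrix.Norms.Operator in
  have h := (LinearMap.toContinuousLinearMap L).hasFDerivAt.comp_hasDerivAt t
    (hasDerivAt_exp_smul_const (𝕂 := ℝ) A t)
  refine h.congr_deriv ?_
  change (β ᵥ* (NormedSpace.exp (t • A) * A)) ⬝ᵥ w = _
  rw [← vecMul_vecMul, dotProduct_mulVec]

theorem phaseTypeDensity_nonneg {A : Matrix ι ι ℝ} {β : ι → ℝ} (hβ : 0 ≤ β)
    (hexp : ∀ t : ℝ, 0 ≤ t → ∀ i j, 0 ≤ NormedSpace.exp (t • A) i j)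
    (hA : 0 ≤ -(A *ᵥ fun _ => 1)) {t : ℝ} (ht : 0 ≤ t) : 0 ≤ phaseTypeDensity A β t :=
  dotProduct_nonneg_of_nonneg (fun j => dotProduct_nonneg_of_nonneg hβ fun i => hexp t ht i j) hA

theorem integrableOn_Ici_phaseTypeDensity {A : Matrix ι ι ℝ} {β : ι → ℝ} (hβ : 0 ≤ β)
    (hexp : ∀ t : ℝ, 0 ≤ t → ∀ i j, 0 ≤ NormedSpace.exp (t • A) i j)
    (hA : 0 ≤ -(A *ᵥ fun _ => 1)) :
    IntegrableOn (phaseTypeDensity A β) (Ici 0) := by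
  set S : ℝ → ℝ := fun t => (β ᵥ* NormedSpace.exp (t • A)) ⬝ᵥ fun _ => 1
  have hS : ∀ t, HasDerivAt (fun u => -S u) (phaseTypeDensity A β t) t := fun t =>
    (hasDerivAt_vecMul_exp_smul_dotProduct A β _ t).neg.congr_deriv <| by
      rw [phaseTypeDensity, dotProduct_neg]
  have hcont : Continuous (phaseTypeDensity A β) := continuous_iff_continuousAt.2 fun t =>
    (hasDerivAt_vecMul_exp_smul_dotProduct A β _ t).continuousAt
  -- `S` is the survival function, so `∫₀ᵀ` of the density is `S 0 - S T ≤ S 0`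
  have hS_nonneg : ∀ t, 0 ≤ t → 0 ≤ S t := fun t ht =>
    dotProduct_nonneg_of_nonneg (fun j => dotProduct_nonneg_of_nonneg hβ fun i => hexp t ht i j)
      fun _ => zero_le_one
  refine (integrableOn_Ici_iff_integrableOn_Ioi).2 <|
    integrableOn_Ioi_of_intervalIntegral_norm_bounded (S 0) 0
      (fun _ => hcont.integrableOn_Ioc) tendsto_id ?_
  filter_upwards [eventually_ge_atTop 0] with T hT
  have hnorm : ∀ t ∈ uIcc 0 T, ‖phaseTypeDensity A β t‖ = phaseTypeDensity A β t := fun t ht =>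
    Real.norm_of_nonneg <| phaseTypeDensity_nonneg hβ hexp hA (uIcc_of_le hT ▸ ht).1
  rw [id, intervalIntegral.integral_congr hnorm,
    intervalIntegral.integral_eq_sub_of_hasDerivAt (fun t _ => hS t) (hcont.intervalIntegrable 0 T)]
  linarith [hS_nonneg T hT]

theorem vecMul_exp_mul_exp_dotProduct_eq_mul {ι' ι'' : Type*} [Fintype ι'] [DecidableEq ι']
    [Fintype ι'']
    {A₁ : Matrix ι ι ℝ} {D₁ : Matrix ι ι' ℝ} {A₂ : Matrix ι' ι' ℝ} {D₂ : Matrix ι' ι'' ℝ}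
    (hD₁ : (D₁ *ᵥ fun _ => 1) = -(A₁ *ᵥ fun _ => 1))
    (hD₂ : (D₂ *ᵥ fun _ => 1) = -(A₂ *ᵥ fun _ => 1)) (α : ι → ℝ) {y : ℝ}
    (hy : (α ᵥ* (NormedSpace.exp (y • A₁) * D₁)) ⬝ᵥ (fun _ => 1) ≠ 0) (t : ℝ) :
    (α ᵥ* (NormedSpace.exp (y • A₁) * D₁ * NormedSpace.exp (t • A₂))) ⬝ᵥ (D₂ *ᵥ fun _ => 1) =
      phaseTypeDensity A₁ α y * phaseTypeDensity A₂
        (((α ᵥ* (NormedSpace.exp (y • A₁) * D₁)) ⬝ᵥ fun _ => 1)⁻¹ •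
          α ᵥ* (NormedSpace.exp (y • A₁) * D₁)) t := by
  have hmarginal :
      phaseTypeDensity A₁ α y = (α ᵥ* (NormedSpace.exp (y • A₁) * D₁)) ⬝ᵥ fun _ => 1 := by
    rw [phaseTypeDensity, ← hD₁, dotProduct_mulVec, vecMul_vecMul]
  rw [hmarginal, phaseTypeDensity, smul_vecMul, smul_dotProduct, smul_eq_mul,
    mul_inv_cancel_left₀ hy, ← hD₂, vecMul_vecMul]

end PhaseType

theorem IsUpperSet.ae_eq_Ioi_csInf {s : Set ℝ} (hs : IsUpperSet s) (hne : s.Nonempty)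
    (hb : BddBelow s) : s =ᵐ[volume] Ioi (sInf s) := by
  have hIoi : Ioi (sInf s) ⊆ s := fun x hx => by
    obtain ⟨y, hy, hyx⟩ := exists_lt_of_csInf_lt hne hx
    exact hs hyx.le hy
  rcases mem_Ici_Ioi_of_subset_of_subset hIoi (fun x hx => csInf_le hb hx : s ⊆ Ici (sInf s))
    with h | h
  · nth_rw 1 [h]
    exact Ioi_ae_eq_Ici.symm
  · nth_rw 1 [mem_singleton_iff.1 h]
    exact EventuallyEq.rfl

theorem IsUpperSet.setIntegral_le_of_tail_le {s : Set ℝ} (hs : IsUpperSet s)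
    (hs₀ : s ⊆ Ici 0) {f g : ℝ → ℝ} (h : ∀ x, 0 ≤ x → ∫ t in Ioi x, f t ≤ ∫ t in Ioi x, g t) :
    ∫ t in s, f t ≤ ∫ t in s, g t := by
  rcases s.eq_empty_or_nonempty with rfl | hne
  · simp
  have hae := hs.ae_eq_Ioi_csInf hne ⟨0, hs₀⟩
  rw [setIntegral_congr_set hae, setIntegral_congr_set hae]
  exact h _ (le_csInf hne hs₀)

section Fubini

variable {α β : Type*} [MeasurableSpace α] [MeasurableSpace β] {μ : Measure α} {ν : Measure β}
  [SFinite μ] [SFinite ν] {Γ : Set (α × β)} {F G : α × β → ℝ}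

theorem setIntegral_prod_mono_of_prodMk_left (hΓ : MeasurableSet Γ)
    (hF : IntegrableOn F Γ (μ.prod ν)) (hG : IntegrableOn G Γ (μ.prod ν))
    (h : ∀ x, ∫ y in Prod.mk x ⁻¹' Γ, F (x, y) ∂ν ≤ ∫ y in Prod.mk x ⁻¹' Γ, G (x, y) ∂ν) :
    ∫ q in Γ, F q ∂μ.prod ν ≤ ∫ q in Γ, G q ∂μ.prod ν := by
  rw [← integrable_indicator_iff hΓ] at hF hG
  rw [← integral_indicator hΓ, ← integral_indicator hΓ, integral_prod _ hF, integral_prod _ hG]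
  refine integral_mono hF.integral_prod_left hG.integral_prod_left fun x => ?_
  have hx := h x
  rwa [← integral_indicator (measurable_prodMk_left hΓ),
    ← integral_indicator (measurable_prodMk_left hΓ)] at hx

theorem setIntegral_prod_mono_of_prodMk_right (hΓ : MeasurableSet Γ)
    (hF : IntegrableOn F Γ (μ.prod ν)) (hG : IntegrableOn G Γ (μ.prod ν))
    (h : ∀ y, ∫ x in (·, y) ⁻¹' Γ, F (x, y) ∂μ ≤ ∫ x in (·, y) ⁻¹' Γ, G (x, y) ∂μ) :
    ∫ q in Γ, F q ∂μ.prod ν ≤ ∫ q in Γ, G q ∂μ.prod ν := by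
  rw [← integrable_indicator_iff hΓ] at hF hG
  rw [← integral_indicator hΓ, ← integral_indicator hΓ, integral_prod_symm _ hF,
    integral_prod_symm _ hG]
  refine integral_mono hF.integral_prod_right hG.integral_prod_right fun y => ?_
  have hy := h y
  rwa [← integral_indicator (measurable_prodMk_right hΓ),
    ← integral_indicator (measurable_prodMk_right hΓ)] at hy

theorem IntegrableOn.mul_prod_of_subset {u : α → ℝ} {v : β → ℝ} {s : Set α} {t : Set β}
    (hu : IntegrableOn u s μ) (hv : IntegrableOn v t ν) (hΓ : Γ ⊆ s ×ˢ t) :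
    IntegrableOn (fun q => u q.1 * v q.2) Γ (μ.prod ν) := by
  have h : IntegrableOn (fun q => u q.1 * v q.2) (s ×ˢ t) (μ.prod ν) := by
    rw [IntegrableOn, ← Measure.prod_restrict]
    exact hu.mul_prod hv
  exact h.mono_set hΓ

end Fubini

section Quadrant

variable {Γ : Set (ℝ × ℝ)} {F : ℝ × ℝ → ℝ} {c e : ℝ → ℝ}

theorem setIntegral_le_of_tail_le_prodMk_left (hΓ : MeasurableSet Γ) (hup : IsUpperSet Γ)
    (h₀ : Γ ⊆ Ici 0 ×ˢ Ici 0) (hF : IntegrableOn F Γ)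
    (hce : IntegrableOn (fun q => c q.1 * e q.2) Γ)
    (h : ∀ y, 0 ≤ y → ∀ x, 0 ≤ x → ∫ t in Ioi x, F (y, t) ≤ ∫ t in Ioi x, c y * e t) :
    ∫ q in Γ, F q ≤ ∫ q in Γ, c q.1 * e q.2 := by
  refine setIntegral_prod_mono_of_prodMk_left hΓ hF hce fun y => ?_
  rcases lt_or_ge y 0 with hy | hy
  · have : Prod.mk y ⁻¹' Γ = ∅ := eq_empty_of_forall_notMem fun t ht => hy.not_ge (h₀ ht).1
    simp [this]
  exact (hup.preimage (monotone_const.prodMk monotone_id)).setIntegral_le_of_tail_le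
    (fun t ht => (h₀ ht).2) (h y hy)

theorem setIntegral_le_of_tail_le_prodMk_right (hΓ : MeasurableSet Γ) (hup : IsUpperSet Γ)
    (h₀ : Γ ⊆ Ici 0 ×ˢ Ici 0) (hF : IntegrableOn F Γ)
    (hce : IntegrableOn (fun q => c q.1 * e q.2) Γ)
    (h : ∀ y, 0 ≤ y → ∀ x, 0 ≤ x → ∫ t in Ioi x, F (t, y) ≤ ∫ t in Ioi x, c t * e y) :
    ∫ q in Γ, F q ≤ ∫ q in Γ, c q.1 * e q.2 := by
  refine setIntegral_prod_mono_of_prodMk_right hΓ hF hce fun y => ?_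
  rcases lt_or_ge y 0 with hy | hy
  · have : (·, y) ⁻¹' Γ = ∅ := eq_empty_of_forall_notMem fun t ht => hy.not_ge (h₀ ht).2
    simp [this]
  exact (hup.preimage (monotone_id.prodMk monotone_const)).setIntegral_le_of_tail_le
    (fun t ht => (h₀ ht).1) (h y hy)

end Quadrant

theorem stmt_17_general (p₁ p₂ p₃ : ℕ)
    (A₁ : Matrix (Fin p₁) (Fin p₁) ℝ) (D₁ : Matrix (Fin p₁) (Fin p₂) ℝ)
    (A₂ : Matrix (Fin p₂) (Fin p₂) ℝ) (D₂ : Matrix (Fin p₂) (Fin p₃) ℝ)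
    (α : Fin p₁ → ℝ) (hα : ∀ i, 0 ≤ α i) (hα1 : α ⬝ᵥ (fun _ => (1 : ℝ)) = 1)
    (hexp₁ : ∀ t : ℝ, 0 ≤ t → ∀ i j, 0 ≤ (NormedSpace.exp (t • A₁)) i j)
    (hD₁ : ∀ i j, 0 ≤ D₁ i j)
    (hD₁1 : D₁ *ᵥ (fun _ => (1 : ℝ)) = -(A₁ *ᵥ (fun _ => (1 : ℝ))))
    (hD₂1 : D₂ *ᵥ (fun _ => (1 : ℝ)) = -(A₂ *ᵥ (fun _ => (1 : ℝ))))
    (p : ℕ) (σ : ℝ) (hσ : 0 < σ)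
    (hpos : ∀ y₁ : ℝ, 0 ≤ y₁ →
      0 < (α ᵥ* (NormedSpace.exp (y₁ • A₁) * D₁)) ⬝ᵥ (fun _ => (1 : ℝ)))
    -- every phase-type density with sub-generator A₁ is ≤_st Erlang(p,σ)
    (h1 : ∀ β : Fin p₁ → ℝ, (∀ i, 0 ≤ β i) → β ⬝ᵥ (fun _ => (1 : ℝ)) = 1 →
      ∀ x : ℝ, 0 ≤ x →
        (∫ t in Set.Ioi x, (β ᵥ* NormedSpace.exp (t • A₁)) ⬝ᵥ (-(A₁ *ᵥ (fun _ => (1 : ℝ)))))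
          ≤ ∫ t in Set.Ioi x, erlangDens p σ t)
    -- every conditional second-coordinate density is ≤_st Erlang(p,σ)
    (h2 : ∀ y₁ : ℝ, 0 ≤ y₁ → ∀ x : ℝ, 0 ≤ x →
      (∫ t in Set.Ioi x,
          ((((α ᵥ* (NormedSpace.exp (y₁ • A₁) * D₁)) ⬝ᵥ (fun _ => (1 : ℝ)))⁻¹ •
              (α ᵥ* (NormedSpace.exp (y₁ • A₁) * D₁))) ᵥ* NormedSpace.exp (t • A₂)) ⬝ᵥ
            (-(A₂ *ᵥ (fun _ => (1 : ℝ)))))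
        ≤ ∫ t in Set.Ioi x, erlangDens p σ t) :
    ∀ Γ : Set (ℝ × ℝ), MeasurableSet Γ →
      Γ ⊆ {q : ℝ × ℝ | 0 ≤ q.1 ∧ 0 ≤ q.2} →
      (∀ q ∈ Γ, ∀ z : ℝ × ℝ, 0 ≤ z.1 → 0 ≤ z.2 → q + z ∈ Γ) →
      (∫ q in Γ,
          (α ᵥ* (NormedSpace.exp (q.1 • A₁) * D₁ * NormedSpace.exp (q.2 • A₂))) ⬝ᵥ
            (D₂ *ᵥ (fun _ => (1 : ℝ))))
        ≤ ∫ q in Γ, erlangDens p σ q.1 * erlangDens p σ q.2 := by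
  intro Γ hΓ h₀ hadd
  have hup : IsUpperSet Γ := fun q q' hqq' hq => by
    simpa using hadd q hq (q' - q) (sub_nonneg.2 hqq'.1) (sub_nonneg.2 hqq'.2)
  have hA₁ : 0 ≤ -(A₁ *ᵥ fun _ => (1 : ℝ)) :=
    hD₁1 ▸ fun i => dotProduct_nonneg_of_nonneg (hD₁ i) fun _ => zero_le_one
  have he := integrableOn_Ici_erlangDens p hσ
  have hce := IntegrableOn.mul_prod_of_subset (integrableOn_Ici_phaseTypeDensity hα hexp₁ hA₁) he h₀
  by_cases hF : IntegrableOn (fun q : ℝ × ℝ =>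
    (α ᵥ* (NormedSpace.exp (q.1 • A₁) * D₁ * NormedSpace.exp (q.2 • A₂))) ⬝ᵥ
      (D₂ *ᵥ fun _ => (1 : ℝ))) Γ
  swap
  · rw [integral_undef hF]
    exact setIntegral_nonneg hΓ fun q hq =>
      mul_nonneg (erlangDens_nonneg p hσ (h₀ hq).1) (erlangDens_nonneg p hσ (h₀ hq).2)
  calc _ ≤ ∫ q in Γ, phaseTypeDensity A₁ α q.1 * erlangDens p σ q.2 :=
        setIntegral_le_of_tail_le_prodMk_left hΓ hup h₀ hF hce fun y₁ hy₁ x hx => ?_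
    _ ≤ _ := setIntegral_le_of_tail_le_prodMk_right hΓ hup h₀ hce
          (IntegrableOn.mul_prod_of_subset he he h₀) fun y₂ hy₂ x hx => ?_
  · simp only [vecMul_exp_mul_exp_dotProduct_eq_mul hD₁1 hD₂1 α (hpos y₁ hy₁).ne',
      integral_const_mul]
    exact mul_le_mul_of_nonneg_left (h2 y₁ hy₁ x hx) (phaseTypeDensity_nonneg hα hexp₁ hA₁ hy₁)
  · simp only [integral_mul_const]
    exact mul_le_mul_of_nonneg_right (h1 α hα hα1 x hx) (erlangDens_nonneg p hσ hy₂)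

/-- Bivariate stochastic domination of a sequential phase-type vector by an i.i.d.
Erlang pair (Lemma 2 of the paper, case `n = 2`): if every phase-type density with
sub-generator `A₁` (resp. every conditional second-coordinate density, with
sub-generator `A₂`) is dominated by the Erlang(p,σ) density in the usual stochastic
order, then for every increasing set `Γ ⊆ ℝ₊²`,
`∫∫_Γ f(y₁,y₂) dy₁dy₂ ≤ ∫∫_Γ f_{p,σ}(y₁) f_{p,σ}(y₂) dy₁dy₂`,
where `f(y₁,y₂) = α exp(A₁y₁) D₁ exp(A₂y₂) D₂ 𝟏`. -/
theorem stmt_17 (p₁ p₂ p₃ : ℕ)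
    (A₁ : Matrix (Fin p₁) (Fin p₁) ℝ) (D₁ : Matrix (Fin p₁) (Fin p₂) ℝ)
    (A₂ : Matrix (Fin p₂) (Fin p₂) ℝ) (D₂ : Matrix (Fin p₂) (Fin p₃) ℝ)
    (α : Fin p₁ → ℝ) (hα : ∀ i, 0 ≤ α i) (hα1 : α ⬝ᵥ (fun _ => (1 : ℝ)) = 1)
    (hexp₁ : ∀ t : ℝ, 0 ≤ t → ∀ i j, 0 ≤ (NormedSpace.exp (t • A₁)) i j)
    (hexp₂ : ∀ t : ℝ, 0 ≤ t → ∀ i j, 0 ≤ (NormedSpace.exp (t • A₂)) i j)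
    (hD₁ : ∀ i j, 0 ≤ D₁ i j) (hD₂ : ∀ i j, 0 ≤ D₂ i j)
    (hD₁1 : D₁ *ᵥ (fun _ => (1 : ℝ)) = -(A₁ *ᵥ (fun _ => (1 : ℝ))))
    (hD₂1 : D₂ *ᵥ (fun _ => (1 : ℝ)) = -(A₂ *ᵥ (fun _ => (1 : ℝ))))
    (p : ℕ) (σ : ℝ) (hσ : 0 < σ) (hp : 1 ≤ p)
    (hpos : ∀ y₁ : ℝ, 0 ≤ y₁ →
      0 < (α ᵥ* (NormedSpace.exp (y₁ • A₁) * D₁)) ⬝ᵥ (fun _ => (1 : ℝ)))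
    -- every phase-type density with sub-generator A₁ is ≤_st Erlang(p,σ)
    (h1 : ∀ β : Fin p₁ → ℝ, (∀ i, 0 ≤ β i) → β ⬝ᵥ (fun _ => (1 : ℝ)) = 1 →
      ∀ x : ℝ, 0 ≤ x →
        (∫ t in Set.Ioi x, (β ᵥ* NormedSpace.exp (t • A₁)) ⬝ᵥ (-(A₁ *ᵥ (fun _ => (1 : ℝ)))))
          ≤ ∫ t in Set.Ioi x, erlangDens p σ t)
    -- every conditional second-coordinate density is ≤_st Erlang(p,σ)
    (h2 : ∀ y₁ : ℝ, 0 ≤ y₁ → ∀ x : ℝ, 0 ≤ x →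
      (∫ t in Set.Ioi x,
          ((((α ᵥ* (NormedSpace.exp (y₁ • A₁) * D₁)) ⬝ᵥ (fun _ => (1 : ℝ)))⁻¹ •
              (α ᵥ* (NormedSpace.exp (y₁ • A₁) * D₁))) ᵥ* NormedSpace.exp (t • A₂)) ⬝ᵥ
            (-(A₂ *ᵥ (fun _ => (1 : ℝ)))))
        ≤ ∫ t in Set.Ioi x, erlangDens p σ t) :
    ∀ Γ : Set (ℝ × ℝ), MeasurableSet Γ →
      Γ ⊆ {q : ℝ × ℝ | 0 ≤ q.1 ∧ 0 ≤ q.2} →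
      (∀ q ∈ Γ, ∀ z : ℝ × ℝ, 0 ≤ z.1 → 0 ≤ z.2 → q + z ∈ Γ) →
      (∫ q in Γ,
          (α ᵥ* (NormedSpace.exp (q.1 • A₁) * D₁ * NormedSpace.exp (q.2 • A₂))) ⬝ᵥ
            (D₂ *ᵥ (fun _ => (1 : ℝ))))
        ≤ ∫ q in Γ, erlangDens p σ q.1 * erlangDens p σ q.2 :=
  stmt_17_general p₁ p₂ p₃ A₁ D₁ A₂ D₂ α hα hα1 hexp₁ hD₁ hD₁1 hD₂1 p σ hσ hpos h1 h2
end
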